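/- arXiv:2201.03703 — 7 statements merged into one kernel-verified Lean document; each statement's English description precedes it below -/
import Mathlib

section
/- (Yoshida's lemma) Let q > 1 be real, and let α, β ∈ ℂ satisfy αβ = q and α + β ∈ ℝ with |α + β| ≤ q + 1. Then for any w ∈ ℂ: if |w| < 1 then |w−α|·|w−β| > |1−αw|·|1−βw|, and if |w| > 1 then |w−α|·|w−β| < |1−αw|·|1−βw|. -/
/-!
With `s = α + β` the two sides are `‖P w‖` and `‖P* w‖` for `P w = w² - s w + q` and its reciprocal
`P* w = q w² - s w + 1`, and expanding gives
`‖P w‖² - ‖P* w‖² = (1 - q) (|w|² - 1) ((1 + q) (|w|² + 1) - 2 s Re w)`.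
Since `|s Re w| ≤ (q + 1) |w|`, the last factor is at least `(1 + q) (|w| - 1)²`, which is positive
off the unit circle, so the difference has the sign of `1 - |w|²`.
-/

lemma norm_sq_quadratic_sub_norm_sq_reciprocal (q s : ℝ) (w : ℂ) :
    ‖w ^ 2 - s * w + q‖ ^ 2 - ‖q * w ^ 2 - s * w + 1‖ ^ 2
      = (1 - q) * (‖w‖ ^ 2 - 1) * ((1 + q) * (‖w‖ ^ 2 + 1) - 2 * s * w.re) := by
  simp only [Complex.sq_norm, Complex.normSq_apply]
  simp only [Complex.add_re, Complex.add_im, Complex.sub_re, Complex.sub_im, Complex.mul_re,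
    Complex.mul_im, Complex.ofReal_re, Complex.ofReal_im, Complex.one_re, Complex.one_im, pow_two]
  ring

lemma sq_norm_sub_one_le {q s : ℝ} (hs : |s| ≤ q + 1) (w : ℂ) :
    (1 + q) * (‖w‖ - 1) ^ 2 ≤ (1 + q) * (‖w‖ ^ 2 + 1) - 2 * s * w.re := by
  have hsw : s * w.re ≤ (q + 1) * ‖w‖ :=
    calc s * w.re ≤ |s| * |w.re| := by rw [← abs_mul]; exact le_abs_self _
      _ ≤ (q + 1) * ‖w‖ :=
        mul_le_mul hs (Complex.abs_re_le_norm w) (abs_nonneg _) ((abs_nonneg s).trans hs)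
  linear_combination 2 * hsw

section Reciprocal

variable {q s : ℝ} {w : ℂ}

lemma reciprocal_factor_pos (hq : 1 < q) (hs : |s| ≤ q + 1) (hw : ‖w‖ ≠ 1) :
    0 < (1 + q) * (‖w‖ ^ 2 + 1) - 2 * s * w.re :=
  lt_of_lt_of_le (by have := sub_ne_zero.mpr hw; positivity) (sq_norm_sub_one_le hs w)

lemma norm_reciprocal_lt_of_norm_lt_one (hq : 1 < q) (hs : |s| ≤ q + 1) (hw : ‖w‖ < 1) :
    ‖q * w ^ 2 - s * w + 1‖ < ‖w ^ 2 - s * w + q‖ := by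
  refine lt_of_pow_lt_pow_left₀ 2 (norm_nonneg _) (sub_pos.mp ?_)
  rw [norm_sq_quadratic_sub_norm_sq_reciprocal]
  have hw2 : ‖w‖ ^ 2 < 1 := pow_lt_one₀ (norm_nonneg w) hw two_ne_zero
  exact mul_pos (mul_pos_of_neg_of_neg (by linarith) (by linarith))
    (reciprocal_factor_pos hq hs hw.ne)

lemma norm_quadratic_lt_of_one_lt_norm (hq : 1 < q) (hs : |s| ≤ q + 1) (hw : 1 < ‖w‖) :
    ‖w ^ 2 - s * w + q‖ < ‖q * w ^ 2 - s * w + 1‖ := by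
  refine lt_of_pow_lt_pow_left₀ 2 (norm_nonneg _) (sub_neg.mp ?_)
  rw [norm_sq_quadratic_sub_norm_sq_reciprocal]
  have hw2 : 1 < ‖w‖ ^ 2 := one_lt_pow₀ hw two_ne_zero
  exact mul_neg_of_neg_of_pos (mul_neg_of_neg_of_pos (by linarith) (by linarith))
    (reciprocal_factor_pos hq hs hw.ne')

end Reciprocal

theorem stmt_1 (q : ℝ) (hq : 1 < q) (α β : ℂ) (hprod : α * β = (q : ℂ))
    (hre : (α + β).im = 0) (hsum : ‖α + β‖ ≤ q + 1) (w : ℂ) :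
    (‖w‖ < 1 →
      ‖w - α‖ * ‖w - β‖ >
        ‖1 - α * w‖ * ‖1 - β * w‖) ∧
    (‖w‖ > 1 →
      ‖w - α‖ * ‖w - β‖ <
        ‖1 - α * w‖ * ‖1 - β * w‖) := by
  set s := (α + β).re
  have hs : α + β = s := Complex.ext rfl (by simp [hre])
  have hs_le : |s| ≤ q + 1 := by rwa [hs, Complex.norm_real, Real.norm_eq_abs] at hsum
  have hP : ‖w - α‖ * ‖w - β‖ = ‖w ^ 2 - s * w + q‖ := by
    rw [← norm_mul]
    congr 1
    linear_combination (-w) * hs + hprod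
  have hQ : ‖1 - α * w‖ * ‖1 - β * w‖ = ‖q * w ^ 2 - s * w + 1‖ := by
    rw [← norm_mul]
    congr 1
    linear_combination (-w) * hs + w ^ 2 * hprod
  rw [hP, hQ]
  exact ⟨norm_reciprocal_lt_of_norm_lt_one hq hs_le, norm_quadratic_lt_of_one_lt_norm hq hs_le⟩
end

section
/- (Generalized Yoshida lemma) Let q > 1 and κ ≥ 0 be real numbers, and let α, β ∈ ℂ satisfy αβ = q, α + β ∈ ℝ, and |α + β| ≤ q + 1. Then for any w ∈ ℂ: if |w| < 1 then |w − αq^κ|·|w − βq^κ| > |1 − αq^κ w|·|1 − βq^κ w|, and if |w| > 1 then |w − αq^κ|·|w − βq^κ| < |1 − αq^κ w|·|1 − βq^κ w|. -/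
/-!
Put `Q = q ^ κ ≥ 1`. The numbers `a = α Q`, `b = β Q` have real sum `σ` and product `P = q Q² > 1`,
and `|σ| ≤ (q + 1) Q ≤ P + 1`. For the two quadratics `(w - a)(w - b) = w² - σ w + P` and
`(1 - a w)(1 - b w) = 1 - σ w + P w²` one computes
`|w² - σ w + P|² - |1 - σ w + P w²|² = (P - 1)(|w|² - 1)(2 σ Re w - (P + 1)(|w|² + 1))`,
and the last factor is negative off the unit circle because `2 |σ Re w| ≤ 2 (P + 1)|w|`.
-/

open Complex

lemma abs_mul_le_mul_sq_add_one {s q Q : ℝ} (hq : 1 ≤ q) (hQ : 1 ≤ Q) (hs : |s| ≤ q + 1) :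
    |s * Q| ≤ q * Q ^ 2 + 1 := by
  rw [abs_mul, abs_of_nonneg (by linarith : (0 : ℝ) ≤ Q)]
  nlinarith [mul_le_mul_of_nonneg_right hs (by linarith : (0 : ℝ) ≤ Q),
    mul_nonneg (by nlinarith : (0 : ℝ) ≤ q * Q - 1) (by linarith : (0 : ℝ) ≤ Q - 1)]

lemma two_mul_mul_re_lt {σ P : ℝ} (hP : 0 < P + 1) (hσ : |σ| ≤ P + 1) {w : ℂ} (hw : ‖w‖ ≠ 1) :
    2 * σ * w.re < (P + 1) * (‖w‖ ^ 2 + 1) := by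
  have hre : σ * w.re ≤ (P + 1) * ‖w‖ := calc
    σ * w.re ≤ |σ| * |w.re| := by rw [← abs_mul]; exact le_abs_self _
    _ ≤ (P + 1) * ‖w‖ := mul_le_mul hσ (abs_re_le_norm w) (abs_nonneg _) hP.le
  have hcircle : 0 < (‖w‖ - 1) ^ 2 := by
    have : ‖w‖ - 1 ≠ 0 := sub_ne_zero.mpr hw
    positivity
  nlinarith [mul_pos hP hcircle]

lemma normSq_quadratic_sub_normSq_reciprocal (σ P : ℝ) (w : ℂ) :
    normSq (w ^ 2 - σ * w + P) - normSq (1 - σ * w + P * w ^ 2) =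
      (P - 1) * (normSq w - 1) * (2 * σ * w.re - (P + 1) * (normSq w + 1)) := by
  simp only [normSq_apply, pow_two, add_re, add_im, sub_re, sub_im, mul_re, mul_im,
    ofReal_re, ofReal_im, one_re, one_im]
  ring

section RealSumProduct

variable {a b : ℂ} {σ P : ℝ} (hsum : a + b = σ) (hprod : a * b = P) (hP : 1 < P)
  (hσ : |σ| ≤ P + 1)
include hsum hprod

lemma normSq_mul_sub_normSq_mul_one_sub (w : ℂ) :
    normSq ((w - a) * (w - b)) - normSq ((1 - a * w) * (1 - b * w)) =
      (P - 1) * (‖w‖ ^ 2 - 1) * (2 * σ * w.re - (P + 1) * (‖w‖ ^ 2 + 1)) := by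
  have hnum : (w - a) * (w - b) = w ^ 2 - σ * w + P := by
    linear_combination (-w) * hsum + hprod
  have hden : (1 - a * w) * (1 - b * w) = 1 - σ * w + P * w ^ 2 := by
    linear_combination (-w) * hsum + w ^ 2 * hprod
  rw [hnum, hden, normSq_quadratic_sub_normSq_reciprocal, Complex.sq_norm]

include hP hσ

lemma norm_one_sub_mul_lt_of_norm_lt_one {w : ℂ} (hw : ‖w‖ < 1) :
    ‖1 - a * w‖ * ‖1 - b * w‖ < ‖w - a‖ * ‖w - b‖ := by
  have hneg := two_mul_mul_re_lt (by linarith) hσ hw.ne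
  have hw2 : ‖w‖ ^ 2 < 1 := by nlinarith [norm_nonneg w]
  have hD := normSq_mul_sub_normSq_mul_one_sub hsum hprod w
  rw [← norm_mul, ← norm_mul, ← sq_lt_sq₀ (norm_nonneg _) (norm_nonneg _),
    Complex.sq_norm, Complex.sq_norm]
  nlinarith [mul_pos (mul_pos (sub_pos.mpr hP) (sub_pos.mpr hw2)) (sub_pos.mpr hneg)]

lemma norm_sub_mul_lt_of_one_lt_norm {w : ℂ} (hw : 1 < ‖w‖) :
    ‖w - a‖ * ‖w - b‖ < ‖1 - a * w‖ * ‖1 - b * w‖ := by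
  have hneg := two_mul_mul_re_lt (by linarith) hσ hw.ne'
  have hw2 : 1 < ‖w‖ ^ 2 := by nlinarith
  have hD := normSq_mul_sub_normSq_mul_one_sub hsum hprod w
  rw [← norm_mul, ← norm_mul, ← sq_lt_sq₀ (norm_nonneg _) (norm_nonneg _),
    Complex.sq_norm, Complex.sq_norm]
  nlinarith [mul_pos (mul_pos (sub_pos.mpr hP) (sub_pos.mpr hw2)) (sub_pos.mpr hneg)]

end RealSumProduct

theorem stmt_2 (q κ : ℝ) (hq : 1 < q) (hκ : 0 ≤ κ) (α β : ℂ)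
    (hprod : α * β = (q : ℂ)) (hre : (α + β).im = 0)
    (hsum : ‖α + β‖ ≤ q + 1) (w : ℂ) :
    (‖w‖ < 1 →
      ‖w - α * ((q ^ κ : ℝ) : ℂ)‖ * ‖w - β * ((q ^ κ : ℝ) : ℂ)‖ >
        ‖1 - α * ((q ^ κ : ℝ) : ℂ) * w‖ * ‖1 - β * ((q ^ κ : ℝ) : ℂ) * w‖) ∧
    (‖w‖ > 1 →
      ‖w - α * ((q ^ κ : ℝ) : ℂ)‖ * ‖w - β * ((q ^ κ : ℝ) : ℂ)‖ <
        ‖1 - α * ((q ^ κ : ℝ) : ℂ) * w‖ * ‖1 - β * ((q ^ κ : ℝ) : ℂ) * w‖) := by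
  set Q := q ^ κ
  have hQ : 1 ≤ Q := Real.one_le_rpow hq.le hκ
  have hreal : α + β = ((α + β).re : ℂ) := Complex.ext rfl (by simpa using hre)
  have hsumQ : α * Q + β * Q = (((α + β).re * Q : ℝ) : ℂ) := by
    push_cast
    rw [← hreal]
    ring
  have hprodQ : α * Q * (β * Q) = ((q * Q ^ 2 : ℝ) : ℂ) := by
    push_cast
    linear_combination (Q : ℂ) ^ 2 * hprod
  have hP : 1 < q * Q ^ 2 := by nlinarith [one_le_pow₀ (n := 2) hQ]
  have hσ : |(α + β).re * Q| ≤ q * Q ^ 2 + 1 :=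
    abs_mul_le_mul_sq_add_one hq.le hQ ((abs_re_le_norm _).trans hsum)
  exact ⟨norm_one_sub_mul_lt_of_norm_lt_one hsumQ hprodQ hP hσ,
    norm_sub_mul_lt_of_one_lt_norm hsumQ hprodQ hP hσ⟩
end

section
/- Let q > 1, κ ≥ 0 be reals and α, β ∈ ℂ with αβ = q, α + β ∈ ℝ, |α + β| ≤ q + 1. Then for any w ∈ ℂ, |w − αq^κ|²·|w − βq^κ|² − |1 − αq^κ w|²·|1 − βq^κ w|² = (1 − q^{2κ+1})·(|w|² − 1)·((1 + q^{2κ+1})(|w|² + 1) − (α+β)q^κ·(w + conj(w))). -/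
/-!
Since `α + β` is real and `αβ = q`, the numbers `a = α q^κ`, `b = β q^κ` have real sum `s` and
real product `p = q^(2κ+1)`. Hence `(w - a)(w - b) = w² - s w + p` is a quadratic with real
coefficients and `(1 - a w)(1 - b w) = 1 - s w + p w²` is its reversal; for such a pair the
difference of squared moduli factors through `1 - p` and `|w|² - 1`, as a direct expansion in
real and imaginary parts shows.
-/

open Complex ComplexConjugate

lemma Complex.normSq_quadratic_sub_normSq_reversed (w : ℂ) (s p : ℝ) :
    normSq (w ^ 2 - s * w + p) - normSq (1 - s * w + p * w ^ 2)
      = (1 - p) * (normSq w - 1) * ((1 + p) * (normSq w + 1) - s * (2 * w.re)) := by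
  simp only [normSq_apply, sub_re, add_re, mul_re, sub_im, add_im, mul_im, pow_two,
    ofReal_re, ofReal_im, one_re, one_im]
  ring

lemma Complex.sq_norm_mul_sub_sq_norm_mul_one_sub (α β w : ℂ) {s p : ℝ} (hs : α + β = s)
    (hp : α * β = p) :
    ‖w - α‖ ^ 2 * ‖w - β‖ ^ 2 - ‖1 - α * w‖ ^ 2 * ‖1 - β * w‖ ^ 2
      = (1 - p) * (‖w‖ ^ 2 - 1) * ((1 + p) * (‖w‖ ^ 2 + 1) - s * (w + conj w).re) := by
  have hA : (w - α) * (w - β) = w ^ 2 - s * w + p := by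
    linear_combination (-w) * hs + hp
  have hB : (1 - α * w) * (1 - β * w) = 1 - s * w + p * w ^ 2 := by
    linear_combination (-w) * hs + w ^ 2 * hp
  simp only [Complex.sq_norm, ← normSq_mul, hA, hB, add_conj, ofReal_re,
    normSq_quadratic_sub_normSq_reversed]

theorem stmt_5_general (q κ : ℝ) (hq : 1 < q) (α β : ℂ)
    (hprod : α * β = (q : ℂ)) (hre : (α + β).im = 0) (w : ℂ) :
    ‖w - α * ((q ^ κ : ℝ) : ℂ)‖ ^ 2 * ‖w - β * ((q ^ κ : ℝ) : ℂ)‖ ^ 2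
      - ‖1 - α * ((q ^ κ : ℝ) : ℂ) * w‖ ^ 2
          * ‖1 - β * ((q ^ κ : ℝ) : ℂ) * w‖ ^ 2
    = (1 - q ^ (2 * κ + 1)) * (‖w‖ ^ 2 - 1) *
        ((1 + q ^ (2 * κ + 1)) * (‖w‖ ^ 2 + 1)
          - (α + β).re * q ^ κ * (w + (starRingEnd ℂ) w).re) := by
  set t := q ^ κ
  have hpow : q ^ (2 * κ + 1) = q * t ^ 2 := by
    rw [Real.rpow_add (by linarith), Real.rpow_one, mul_comm 2 κ, Real.rpow_mul (by linarith),
      Real.rpow_two, mul_comm]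
  have hsum : α + β = (α + β).re := ext rfl (by simpa using hre)
  have hs : α * t + β * t = ((α + β).re * t : ℝ) := by
    rw [← add_mul, ofReal_mul, ← hsum]
  have hp : α * t * (β * t) = (q * t ^ 2 : ℝ) := by
    push_cast
    linear_combination (t : ℂ) ^ 2 * hprod
  rw [hpow, ← sq_norm_mul_sub_sq_norm_mul_one_sub _ _ w hs hp, mul_assoc α, mul_assoc β]

theorem stmt_5 (q κ : ℝ) (hq : 1 < q) (hκ : 0 ≤ κ) (α β : ℂ)
    (hprod : α * β = (q : ℂ)) (hre : (α + β).im = 0) (w : ℂ) :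
    ‖w - α * ((q ^ κ : ℝ) : ℂ)‖ ^ 2 * ‖w - β * ((q ^ κ : ℝ) : ℂ)‖ ^ 2
      - ‖1 - α * ((q ^ κ : ℝ) : ℂ) * w‖ ^ 2
          * ‖1 - β * ((q ^ κ : ℝ) : ℂ) * w‖ ^ 2
    = (1 - q ^ (2 * κ + 1)) * (‖w‖ ^ 2 - 1) *
        ((1 + q ^ (2 * κ + 1)) * (‖w‖ ^ 2 + 1)
          - (α + β).re * q ^ κ * (w + (starRingEnd ℂ) w).re) :=
  stmt_5_general q κ hq α β hprod hre w
end

section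
/- Let q > 1 be real and let v > 3/(2(q−1)) be a real number (playing the role of v̂₂/v̂₁²). Then the closed disc in ℂ centered at c = (v + 1/(1−q²))/(qv + q²/(1−q²)) with radius r = 1/(2q(v + q/(1−q²))) is contained in the open unit disc, i.e., |c| + r < 1. (Here note v + q/(1−q²) > 0 since v > 3/(2(q−1)) > q/(q²−1).) -/
theorem stmt_9 (q v : ℝ) (hq : 1 < q) (hv : v > 3 / (2 * (q - 1))) :
    |(v - 1 / (q ^ 2 - 1)) / (q * v - q ^ 2 / (q ^ 2 - 1))|
      + 1 / (2 * q * (v - q / (q ^ 2 - 1))) < 1 := by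
  have hq1 : (0:ℝ) < q - 1 := by linarith
  have hq2 : (0:ℝ) < q ^ 2 - 1 := by nlinarith
  have hv' : (q - 1) * v > 3 / 2 := by
    rw [gt_iff_lt, div_lt_iff₀ (by linarith : (0:ℝ) < 2 * (q - 1))] at hv
    nlinarith
  have hw : 0 < v - q / (q ^ 2 - 1) := by
    rw [sub_pos, div_lt_iff₀ hq2]
    nlinarith
  have hA : 0 < v - 1 / (q ^ 2 - 1) := by
    rw [sub_pos, div_lt_iff₀ hq2]
    nlinarith
  have hB : 0 < q * v - q ^ 2 / (q ^ 2 - 1) := by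
    have : q * v - q ^ 2 / (q ^ 2 - 1) = q * (v - q / (q ^ 2 - 1)) := by ring
    rw [this]; positivity
  rw [abs_of_pos (div_pos hA hB)]
  rw [div_add_div _ _ (ne_of_gt hB) (by positivity), div_lt_one (by positivity)]
  have h1 : q * v - q ^ 2 / (q ^ 2 - 1) = q * (v - q / (q ^ 2 - 1)) := by ring
  have h2 : (v - 1 / (q ^ 2 - 1)) + 1/2 < q * (v - q / (q ^ 2 - 1)) := by
    have : q * (v - q / (q ^ 2 - 1)) - (v - 1 / (q ^ 2 - 1)) = (q - 1) * v - (q ^ 2 - 1) / (q ^ 2 - 1) := by ring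
    rw [div_self (ne_of_gt hq2)] at this
    linarith
  nlinarith [mul_pos hw hq2, mul_pos hB hw]
end

section
/- Let A, B, E be finite modules over a ring, and (f,g) ∈ W(A,B;E) a pair with f : A → E injective, g : E → B surjective, im f = ker g. Then the stabilizer of (f,g) under the action of Aut(E) given by τ·(f,g) = (τ∘f, g∘τ⁻¹) is in bijection with Hom(B, A). -/
theorem stmt_12 {R A B E : Type} [Ring R]
    [AddCommGroup A] [Module R A] [AddCommGroup B] [Module R B]
    [AddCommGroup E] [Module R E] [Fintype A] [Fintype B] [Fintype E]
    (f : A →ₗ[R] E) (g : E →ₗ[R] B)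
    (hf : Function.Injective f) (hg : Function.Surjective g)
    (hfg : LinearMap.range f = LinearMap.ker g) :
    Nonempty
      ({τ : E ≃ₗ[R] E //
          τ.toLinearMap ∘ₗ f = f ∧ g ∘ₗ τ.symm.toLinearMap = g}
        ≃ (B →ₗ[R] A)) := by
  classical
  have hgf : ∀ a : A, g (f a) = 0 := by
    intro a
    have : f a ∈ LinearMap.ker g := hfg ▸ LinearMap.mem_range_self f a
    simpa using this
  -- forward map
  set N : (B →ₗ[R] A) → (E →ₗ[R] E) := fun h => f ∘ₗ h ∘ₗ g with hN
  have hNsq : ∀ h₁ h₂, (N h₁) ∘ₗ (N h₂) = 0 := by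
    intro h₁ h₂
    ext x
    simp [N, hgf]
  have key : ∀ h₁ h₂ : B →ₗ[R] A,
      (LinearMap.id + N h₁) ∘ₗ (LinearMap.id + N h₂) = LinearMap.id + (N h₁ + N h₂) := by
    intro h₁ h₂
    have := hNsq h₁ h₂
    ext x
    have : (N h₁) ((N h₂) x) = 0 := by
      have := congrArg (fun m => m x) (hNsq h₁ h₂); simpa using this
    simp [LinearMap.add_apply, this]
    abel
  let φ : (B →ₗ[R] A) → {τ : E ≃ₗ[R] E //
      τ.toLinearMap ∘ₗ f = f ∧ g ∘ₗ τ.symm.toLinearMap = g} := fun h =>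
    ⟨LinearEquiv.ofLinear (LinearMap.id + N h) (LinearMap.id + N (-h))
      (by rw [key, show N h + N (-h) = 0 by ext x; simp [N], add_zero])
      (by rw [key, show N (-h) + N h = 0 by ext x; simp [N], add_zero]),
      by
        constructor
        · ext a
          simp [N, hgf]
        · rw [LinearEquiv.ofLinear_symm_toLinearMap]
          ext x
          simp [N, hgf]⟩
  have hinj : Function.Injective φ := by
    intro h₁ h₂ hEq
    have h1 : (LinearMap.id + N h₁ : E →ₗ[R] E) = LinearMap.id + N h₂ := by
      have := congrArg (fun t => (t : {τ : E ≃ₗ[R] E //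
          τ.toLinearMap ∘ₗ f = f ∧ g ∘ₗ τ.symm.toLinearMap = g}).1.toLinearMap) hEq
      simpa [φ] using this
    have h2 : N h₁ = N h₂ := by
      have := add_left_cancel h1; exact this
    ext b
    obtain ⟨e, he⟩ := hg b
    apply hf
    have := congrArg (fun m => m e) h2
    simpa [N, he] using this
  have hsurj : Function.Surjective φ := by
    rintro ⟨τ, hτf, hτg⟩
    -- g ∘ τ = g
    have hgτ : ∀ x, g (τ x) = g x := by
      intro x
      have := congrArg (fun m => m (τ x)) hτg
      simpa using this.symm
    -- τ x - x ∈ range f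
    have hmem : ∀ x : E, τ x - x ∈ LinearMap.range f := by
      intro x
      rw [hfg]
      simp [LinearMap.mem_ker, hgτ]
    -- define k : E →ₗ A
    let k0 : E → A := fun x => (hmem x).choose
    have hk0 : ∀ x, f (k0 x) = τ x - x := fun x => (hmem x).choose_spec
    let k : E →ₗ[R] A :=
      { toFun := k0
        map_add' := by
          intro x y
          apply hf
          simp only [map_add, hk0]
          abel
        map_smul' := by
          intro c x
          apply hf
          simp only [map_smul, hk0, RingHom.id_apply, smul_sub] }
    have hker : LinearMap.ker g ≤ LinearMap.ker k := by
      intro x hx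
      rw [← hfg] at hx
      obtain ⟨a, rfl⟩ := hx
      have hτfa : τ (f a) = f a := by
        have := congrArg (fun m => m a) hτf
        simpa using this
      have : f (k (f a)) = 0 := by
        show f (k0 (f a)) = 0
        rw [hk0, hτfa, sub_self]
      simpa [LinearMap.mem_ker] using hf (by simpa using this)
    let h : B →ₗ[R] A :=
      (Submodule.liftQ (LinearMap.ker g) k hker) ∘ₗ
        (g.quotKerEquivOfSurjective hg).symm.toLinearMap
    have hhg : ∀ x : E, h (g x) = k x := by
      intro x
      have : (g.quotKerEquivOfSurjective hg).symm (g x) =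
          Submodule.Quotient.mk x := by
        apply (g.quotKerEquivOfSurjective hg).injective
        simp [LinearMap.quotKerEquivOfSurjective, LinearMap.quotKerEquivRange]
      simp only [h, LinearMap.comp_apply, LinearEquiv.coe_coe, this]
      rfl
    refine ⟨h, ?_⟩
    apply Subtype.ext
    apply LinearEquiv.toLinearMap_injective
    ext x
    simp only [φ, LinearEquiv.ofLinear, LinearMap.add_apply, LinearMap.id_apply]
    show x + (f ∘ₗ h ∘ₗ g) x = τ x
    simp only [LinearMap.comp_apply, hhg]
    rw [show f (k x) = τ x - x from hk0 x]
    abel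
  exact ⟨(Equiv.ofBijective φ ⟨hinj, hsurj⟩).symm⟩
end

section
/- With notation as in the previous items, for finite modules A, B, E one has #Fil(A,B;E) = (#Ext¹_E(B,A) · #Aut(E)) / (#Aut(A) · #Aut(B) · #Hom(B,A)), where Ext¹_E(B,A) denotes the set of equivalence classes of extensions 0 → A → E' → B → 0 with E' ≅ E. -/
open LinearMap MulAction

namespace Stmt13Aux

variable {R A B E : Type} [Ring R]
    [AddCommGroup A] [Module R A] [AddCommGroup B] [Module R B]
    [AddCommGroup E] [Module R E]

abbrev SES (R A B E : Type) [Ring R] [AddCommGroup A] [Module R A]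
    [AddCommGroup B] [Module R B] [AddCommGroup E] [Module R E] : Type :=
  {p : (A →ₗ[R] E) × (E →ₗ[R] B) //
    Function.Injective p.1 ∧ Function.Surjective p.2 ∧
    LinearMap.range p.1 = LinearMap.ker p.2}

lemma pi_zero (p : SES R A B E) : p.val.2 ∘ₗ p.val.1 = 0 := by
  ext a
  have : p.val.1 a ∈ LinearMap.ker p.val.2 := p.prop.2.2 ▸ LinearMap.mem_range_self _ a
  simpa using this

/-- `1 + i ∘ h ∘ π` as a linear automorphism of `E`. -/
noncomputable def unip (p : SES R A B E) (h : B →ₗ[R] A) : E ≃ₗ[R] E :=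
  LinearEquiv.ofLinear (LinearMap.id + p.val.1 ∘ₗ h ∘ₗ p.val.2)
    (LinearMap.id - p.val.1 ∘ₗ h ∘ₗ p.val.2)
    (by
      ext x
      have h0 : p.val.2 (p.val.1 (h (p.val.2 x))) = 0 := by
        have := LinearMap.congr_fun (pi_zero p) (h (p.val.2 x))
        simpa using this
      simp [h0])
    (by
      ext x
      have h0 : p.val.2 (p.val.1 (h (p.val.2 x))) = 0 := by
        have := LinearMap.congr_fun (pi_zero p) (h (p.val.2 x))
        simpa using this
      simp [h0])

lemma unip_apply (p : SES R A B E) (h : B →ₗ[R] A) (x : E) :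
    unip p h x = x + p.val.1 (h (p.val.2 x)) := rfl

lemma unip_symm_apply (p : SES R A B E) (h : B →ₗ[R] A) (x : E) :
    (unip p h).symm x = x - p.val.1 (h (p.val.2 x)) := rfl



instance : SMul (E ≃ₗ[R] E) (SES R A B E) where
  smul τ p := ⟨(τ.toLinearMap ∘ₗ p.val.1, p.val.2 ∘ₗ τ.symm.toLinearMap), by
    obtain ⟨hi, hs, hk⟩ := p.property
    refine ⟨τ.injective.comp hi, hs.comp τ.symm.surjective, ?_⟩
    rw [LinearMap.range_comp, LinearMap.ker_comp, ← hk,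
      Submodule.map_equiv_eq_comap_symm]⟩

lemma smul_val (τ : E ≃ₗ[R] E) (p : SES R A B E) :
    (τ • p).val = (τ.toLinearMap ∘ₗ p.val.1, p.val.2 ∘ₗ τ.symm.toLinearMap) := rfl

instance : MulAction (E ≃ₗ[R] E) (SES R A B E) where
  one_smul p := Subtype.ext (Prod.ext (by ext x; rfl) (by ext x; rfl))
  mul_smul τ σ p := Subtype.ext (Prod.ext (by ext x; rfl) (by ext x; rfl))

lemma smul_eq_iff (τ : E ≃ₗ[R] E) (p p' : SES R A B E) :
    τ • p = p' ↔ τ.toLinearMap ∘ₗ p.val.1 = p'.val.1 ∧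
      p.val.2 ∘ₗ τ.symm.toLinearMap = p'.val.2 := by
  rw [Subtype.ext_iff, smul_val, Prod.ext_iff]

lemma unip_mem (p : SES R A B E) (h : B →ₗ[R] A) :
    unip p h ∈ stabilizer (E ≃ₗ[R] E) p := by
  rw [mem_stabilizer_iff, smul_eq_iff]
  constructor
  · ext a
    have h0 : p.val.2 (p.val.1 a) = 0 := LinearMap.congr_fun (pi_zero p) a
    simp [unip_apply, h0]
  · ext x
    have h0 : p.val.2 (p.val.1 (h (p.val.2 x))) = 0 :=
      LinearMap.congr_fun (pi_zero p) (h (p.val.2 x))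
    simp [unip_symm_apply, map_sub, h0]

noncomputable def stabEquiv (p : SES R A B E) :
    (B →ₗ[R] A) ≃ stabilizer (E ≃ₗ[R] E) p := by
  refine Equiv.ofBijective (fun h => ⟨unip p h, unip_mem p h⟩) ⟨?_, ?_⟩
  · intro h h' hh
    have hh' : ∀ x, unip p h x = unip p h' x := fun x =>
      LinearEquiv.congr_fun (congrArg Subtype.val hh) x
    ext b
    obtain ⟨x, hx⟩ := p.prop.2.1 b
    have := hh' x
    rw [unip_apply, unip_apply, hx] at this
    have : p.val.1 (h b) = p.val.1 (h' b) := by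
      have := add_left_cancel this
      exact this
    exact p.prop.1 this
  · rintro ⟨τ, hτ⟩
    rw [mem_stabilizer_iff, smul_eq_iff] at hτ
    obtain ⟨h1, h2⟩ := hτ
    have hπτ : ∀ x, p.val.2 (τ x) = p.val.2 x := by
      intro x
      have := LinearMap.congr_fun h2 (τ x)
      simp at this
      exact this.symm
    set σ : E →ₗ[R] E := τ.toLinearMap - LinearMap.id with hσ
    have hmem : ∀ x, σ x ∈ LinearMap.range p.val.1 := by
      intro x
      rw [p.prop.2.2, LinearMap.mem_ker]
      simp [hσ, map_sub, hπτ x]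
    set σ' : E →ₗ[R] LinearMap.range p.val.1 :=
      LinearMap.codRestrict (LinearMap.range p.val.1) σ hmem with hσ'
    have hker : LinearMap.ker p.val.2 ≤ LinearMap.ker σ' := by
      intro x hx
      rw [← p.prop.2.2] at hx
      obtain ⟨a, rfl⟩ := hx
      have h1a : τ (p.val.1 a) = p.val.1 a := by
        simpa using LinearMap.congr_fun h1 a
      have : σ (p.val.1 a) = 0 := by
        simp [hσ, h1a]
      simp only [LinearMap.mem_ker]
      exact Subtype.ext (by simpa [hσ'] using this)
    set lift := Submodule.liftQ (LinearMap.ker p.val.2) σ' hker with hlift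
    set qB := p.val.2.quotKerEquivOfSurjective p.prop.2.1 with hqB
    set eA := LinearEquiv.ofInjective p.val.1 p.prop.1 with heA
    refine ⟨eA.symm.toLinearMap ∘ₗ lift ∘ₗ qB.symm.toLinearMap, ?_⟩
    apply Subtype.ext
    apply LinearEquiv.toLinearMap_injective
    ext x
    have hq : qB.symm (p.val.2 x) = Submodule.Quotient.mk x := by
      rw [LinearEquiv.symm_apply_eq]
      rfl
    have key : p.val.1 ((eA.symm.toLinearMap ∘ₗ lift ∘ₗ qB.symm.toLinearMap) (p.val.2 x))
        = σ x := by
      simp only [LinearMap.comp_apply, LinearEquiv.coe_coe, hq]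
      rw [hlift, Submodule.liftQ_apply]
      have : ∀ y : LinearMap.range p.val.1, p.val.1 (eA.symm y) = (y : E) := by
        intro y
        conv_rhs => rw [← eA.apply_symm_apply y]
        rw [heA]
        exact (LinearEquiv.ofInjective_apply p.val.1 (eA.symm y)).symm
      rw [this]
      rfl
    show unip p _ x = τ x
    rw [unip_apply, key]
    simp [hσ]

lemma card_stab (p : SES R A B E) :
    Nat.card (stabilizer (E ≃ₗ[R] E) p) = Nat.card (B →ₗ[R] A) :=
  (Nat.card_congr (stabEquiv p)).symm




abbrev Fil (R A B E : Type) [Ring R] [AddCommGroup A] [Module R A]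
    [AddCommGroup B] [Module R B] [AddCommGroup E] [Module R E] : Type :=
  {F : Submodule R E // Nonempty (F ≃ₗ[R] A) ∧ Nonempty ((E ⧸ F) ≃ₗ[R] B)}

noncomputable def toSES
    (x : Σ F : Fil R A B E, (A ≃ₗ[R] F.val) × ((E ⧸ F.val) ≃ₗ[R] B)) :
    SES R A B E :=
  ⟨(x.1.val.subtype ∘ₗ x.2.1.toLinearMap, x.2.2.toLinearMap ∘ₗ x.1.val.mkQ), by
    refine ⟨x.1.val.injective_subtype.comp x.2.1.injective,
      x.2.2.surjective.comp (Submodule.mkQ_surjective _), ?_⟩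
    rw [LinearMap.range_comp, LinearMap.ker_comp, LinearEquiv.range,
      Submodule.map_subtype_top, LinearEquiv.ker, Submodule.comap_bot,
      Submodule.ker_mkQ]⟩

lemma range_toSES (x : Σ F : Fil R A B E, (A ≃ₗ[R] F.val) × ((E ⧸ F.val) ≃ₗ[R] B)) :
    LinearMap.range (toSES x).val.1 = x.1.val := by
  show LinearMap.range (x.1.val.subtype ∘ₗ x.2.1.toLinearMap) = x.1.val
  rw [LinearMap.range_comp, LinearEquiv.range, Submodule.map_subtype_top]

lemma toSES_injective :
    Function.Injective (toSES (R := R) (A := A) (B := B) (E := E)) := by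
  rintro ⟨⟨F, hF⟩, e, q⟩ ⟨⟨F', hF'⟩, e', q'⟩ h
  have hFF : F = F' := by
    have := congrArg (fun p => LinearMap.range (Subtype.val p).1) h
    simpa [range_toSES] using
      (range_toSES ⟨⟨F, hF⟩, e, q⟩).symm.trans
        ((congrArg (fun p => LinearMap.range (Subtype.val p).1) h).trans
          (range_toSES ⟨⟨F', hF'⟩, e', q'⟩))
  subst hFF
  obtain ⟨h1, h2⟩ := Prod.ext_iff.mp (Subtype.ext_iff.mp h)
  have he : e = e' := by
    apply LinearEquiv.ext
    intro a
    exact Subtype.ext (LinearMap.congr_fun h1 a)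
  have hq : q = q' := by
    apply LinearEquiv.toLinearMap_injective
    exact Submodule.linearMap_qext _ h2
  subst he; subst hq
  rfl

lemma toSES_surjective :
    Function.Surjective (toSES (R := R) (A := A) (B := B) (E := E)) := by
  intro p
  obtain ⟨hi, hs, hk⟩ := p.prop
  refine ⟨⟨⟨LinearMap.range p.val.1,
      ⟨(LinearEquiv.ofInjective p.val.1 hi).symm⟩,
      ⟨(Submodule.quotEquivOfEq _ _ hk).trans (p.val.2.quotKerEquivOfSurjective hs)⟩⟩,
      (LinearEquiv.ofInjective p.val.1 hi,
        (Submodule.quotEquivOfEq _ _ hk).trans (p.val.2.quotKerEquivOfSurjective hs))⟩, ?_⟩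
  apply Subtype.ext
  apply Prod.ext
  · ext a
    simp [toSES]
  · ext x
    show ((Submodule.quotEquivOfEq _ _ hk).trans (p.val.2.quotKerEquivOfSurjective hs))
      (Submodule.Quotient.mk x) = p.val.2 x
    rw [LinearEquiv.trans_apply, Submodule.quotEquivOfEq_mk]
    rfl

noncomputable def sesEquivSigma :
    SES R A B E ≃ Σ F : Fil R A B E, (A ≃ₗ[R] F.val) × ((E ⧸ F.val) ≃ₗ[R] B) :=
  (Equiv.ofBijective toSES ⟨toSES_injective, toSES_surjective⟩).symm

noncomputable def fibEquiv (F : Fil R A B E) :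
    ((A ≃ₗ[R] F.val) × ((E ⧸ F.val) ≃ₗ[R] B)) ≃ ((A ≃ₗ[R] A) × (B ≃ₗ[R] B)) := by
  have eF : (F.val : Submodule R E) ≃ₗ[R] A := Classical.choice F.prop.1
  have qF : (E ⧸ F.val) ≃ₗ[R] B := Classical.choice F.prop.2
  exact Equiv.prodCongr
    { toFun := fun f => f.trans eF
      invFun := fun g => g.trans eF.symm
      left_inv := fun f => by ext a; simp
      right_inv := fun g => by ext a; simp }
    { toFun := fun f => qF.symm.trans f
      invFun := fun g => qF.trans g
      left_inv := fun f => by ext a; simp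
      right_inv := fun g => by ext a; simp }

noncomputable def sesEquivProd :
    SES R A B E ≃ (Fil R A B E) × ((A ≃ₗ[R] A) × (B ≃ₗ[R] B)) :=
  (sesEquivSigma.trans (Equiv.sigmaCongrRight fibEquiv)).trans
    (Equiv.sigmaEquivProd _ _)

lemma card_SES_eq :
    Nat.card (SES R A B E)
      = Nat.card (Fil R A B E) * (Nat.card (A ≃ₗ[R] A) * Nat.card (B ≃ₗ[R] B)) := by
  rw [Nat.card_congr (sesEquivProd (R := R) (A := A) (B := B) (E := E)),
    Nat.card_prod, Nat.card_prod]


noncomputable def sesProdHomEquiv :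
    (SES R A B E) × (B →ₗ[R] A) ≃
      (orbitRel.Quotient (E ≃ₗ[R] E) (SES R A B E)) × (E ≃ₗ[R] E) :=
  ((Equiv.prodCongr (selfEquivSigmaOrbits (E ≃ₗ[R] E) (SES R A B E)) (Equiv.refl _)).trans
    (Equiv.sigmaProdDistrib _ _)).trans <|
  (Equiv.sigmaCongrRight (fun (ω : orbitRel.Quotient (E ≃ₗ[R] E) (SES R A B E)) =>
    (Equiv.prodCongr (orbitEquivQuotientStabilizer (E ≃ₗ[R] E) ω.out)
      (stabEquiv ω.out)).trans
      (Subgroup.groupEquivQuotientProdSubgroup).symm)).trans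
  (Equiv.sigmaEquivProd _ _)

lemma card_SES_mul_hom :
    Nat.card (SES R A B E) * Nat.card (B →ₗ[R] A)
      = Nat.card (orbitRel.Quotient (E ≃ₗ[R] E) (SES R A B E)) * Nat.card (E ≃ₗ[R] E) := by
  rw [← Nat.card_prod, ← Nat.card_prod]
  exact Nat.card_congr sesProdHomEquiv

end Stmt13Aux

theorem stmt_13 {R A B E : Type} [Ring R]
    [AddCommGroup A] [Module R A] [AddCommGroup B] [Module R B]
    [AddCommGroup E] [Module R E] [Fintype A] [Fintype B] [Fintype E]
    (r : {p : (A →ₗ[R] E) × (E →ₗ[R] B) //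
            Function.Injective p.1 ∧ Function.Surjective p.2 ∧
            LinearMap.range p.1 = LinearMap.ker p.2} →
         {p : (A →ₗ[R] E) × (E →ₗ[R] B) //
            Function.Injective p.1 ∧ Function.Surjective p.2 ∧
            LinearMap.range p.1 = LinearMap.ker p.2} → Prop)
    (hr : ∀ p p', r p p' ↔ ∃ τ : E ≃ₗ[R] E,
        τ.toLinearMap ∘ₗ p.val.1 = p'.val.1 ∧
        p.val.2 ∘ₗ τ.symm.toLinearMap = p'.val.2) :
    Nat.card {F : Submodule R E //
          Nonempty (F ≃ₗ[R] A) ∧ Nonempty ((E ⧸ F) ≃ₗ[R] B)}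
        * (Nat.card (A ≃ₗ[R] A) * Nat.card (B ≃ₗ[R] B) * Nat.card (B →ₗ[R] A))
      = Nat.card (Quot r) * Nat.card (E ≃ₗ[R] E) := by
  have hquot : Nat.card (Quot r)
      = Nat.card (MulAction.orbitRel.Quotient (E ≃ₗ[R] E) (Stmt13Aux.SES R A B E)) := by
    refine Nat.card_congr (Quot.congrRight ?_)
    intro a b
    rw [hr]
    constructor
    · rintro ⟨τ, h1, h2⟩
      exact Setoid.symm' _ (MulAction.mem_orbit_iff.2
        ⟨τ, (Stmt13Aux.smul_eq_iff τ a b).2 ⟨h1, h2⟩⟩)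
    · intro h
      obtain ⟨τ, hτ⟩ := MulAction.mem_orbit_iff.1 (Setoid.symm' _ h)
      exact ⟨τ, ((Stmt13Aux.smul_eq_iff τ a b).1 hτ).1,
        ((Stmt13Aux.smul_eq_iff τ a b).1 hτ).2⟩
  show Nat.card (Stmt13Aux.Fil R A B E)
        * (Nat.card (A ≃ₗ[R] A) * Nat.card (B ≃ₗ[R] B) * Nat.card (B →ₗ[R] A))
      = Nat.card (Quot r) * Nat.card (E ≃ₗ[R] E)
  rw [hquot, ← Stmt13Aux.card_SES_mul_hom, Stmt13Aux.card_SES_eq (R := R) (A := A) (B := B) (E := E)]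
  ring
end

section
/- Let q > 1 be real and ω ∈ ℂ with ω·conj(ω) = q and |ω + conj(ω)| ≤ q + 1. Then for any w ∈ ℂ with |w| < 1, |(conj(ω) − w)(ω − w)| ≥ |(1 − ωw)(1 − conj(ω)w)|, i.e. the ratio ((conj(ω)−w)(ω−w))/((1−ωw)(1−conj(ω)w)) has modulus strictly greater than 1. -/
/-!
For `|a| > 1` and `|w| < 1` one has `|a - w|² - |1 - ā w|² = (|a|² - 1)(1 - |w|²) > 0`, so
`|1 - ā w| < |a - w|`. Applying this to `a = ω̄` and `a = ω` (both of modulus `√q > 1`) and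
multiplying the two strict inequalities between nonnegative numbers gives the claim.
-/

open Complex ComplexConjugate

theorem Complex.normSq_sub_sub_normSq_one_sub_conj_mul (a w : ℂ) :
    normSq (a - w) - normSq (1 - conj a * w) = (normSq a - 1) * (1 - normSq w) := by
  simp only [normSq_apply, sub_re, sub_im, mul_re, mul_im, one_re, one_im, conj_re, conj_im]
  ring

theorem Complex.norm_one_sub_conj_mul_lt_norm_sub {a w : ℂ} (ha : 1 < ‖a‖) (hw : ‖w‖ < 1) :
    ‖1 - conj a * w‖ < ‖a - w‖ := by
  rw [← pow_lt_pow_iff_left₀ (norm_nonneg _) (norm_nonneg _) two_ne_zero,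
    ← normSq_eq_norm_sq, ← normSq_eq_norm_sq, ← sub_pos,
    normSq_sub_sub_normSq_one_sub_conj_mul, normSq_eq_norm_sq, normSq_eq_norm_sq]
  have ha2 : 1 < ‖a‖ ^ 2 := one_lt_pow₀ ha two_ne_zero
  have hw2 : ‖w‖ ^ 2 < 1 := pow_lt_one₀ (norm_nonneg w) hw two_ne_zero
  exact mul_pos (sub_pos.2 ha2) (sub_pos.2 hw2)

theorem stmt_16_general (q : ℝ) (hq : 1 < q) (ω : ℂ) (hprod : ω * (starRingEnd ℂ) ω = (q : ℂ))
    (w : ℂ) (hw : ‖w‖ < 1) :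
    ‖((starRingEnd ℂ) ω - w) * (ω - w)‖ >
      ‖(1 - ω * w) * (1 - (starRingEnd ℂ) ω * w)‖ := by
  have hnorm_sq : ‖ω‖ ^ 2 = q := by exact_mod_cast (mul_conj' ω).symm.trans hprod
  have hω : 1 < ‖ω‖ := (one_lt_sq_iff₀ (norm_nonneg ω)).1 (hnorm_sq ▸ hq)
  have hconj : ‖1 - ω * w‖ < ‖conj ω - w‖ := by
    simpa only [conj_conj] using norm_one_sub_conj_mul_lt_norm_sub (a := conj ω)
      (by rwa [norm_conj]) hw
  rw [gt_iff_lt, norm_mul, norm_mul]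
  exact mul_lt_mul'' hconj (norm_one_sub_conj_mul_lt_norm_sub hω hw)
    (norm_nonneg _) (norm_nonneg _)

theorem stmt_16 (q : ℝ) (hq : 1 < q) (ω : ℂ) (hprod : ω * (starRingEnd ℂ) ω = (q : ℂ))
    (hsum : ‖ω + (starRingEnd ℂ) ω‖ ≤ q + 1) (w : ℂ) (hw : ‖w‖ < 1)
    (h1 : 1 - ω * w ≠ 0) (h2 : 1 - (starRingEnd ℂ) ω * w ≠ 0) :
    ‖((starRingEnd ℂ) ω - w) * (ω - w)‖ >
      ‖(1 - ω * w) * (1 - (starRingEnd ℂ) ω * w)‖ :=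
  stmt_16_general q hq ω hprod w hw
end
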